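/- arXiv:2110.11723 — 5 statements merged into one kernel-verified Lean document; each statement's English description precedes it below -/
import Mathlib

section
/- (Smoothness of the smooth maximum, Fact A.1, Property 3.) For every integer m ≥ 1, every real β > 0, and all x, h ∈ ℝ^m: smax_β(x + h) ≤ smax_β(x) + ∑_{i=1}^m p_i·h_i + β·(max_i |h_i|)², where p_i := exp(β·x_i)/∑_{j=1}^m exp(β·x_j). -/
/-- The smooth maximum `smax_β(x) = (1/β)·ln(∑ i, exp(β·x_i))`. -/
noncomputable def smax {m : ℕ} (β : ℝ) (x : Fin m → ℝ) : ℝ :=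
  (1 / β) * Real.log (∑ i, Real.exp (β * x i))

/-!
With `p` the softmax weights of `β • x`,
`smax_β(x + h) - smax_β(x) = β⁻¹ · log 𝔼_p[exp(β h_I)]`. The random variable `β h_I` is
bounded by `β‖h‖`, so Hoeffding's lemma bounds this log-moment-generating function
by `β 𝔼_p[h_I] + (β‖h‖)² / 2`.
-/

open Real MeasureTheory ProbabilityTheory

lemma ProbabilityTheory.mgf_one_le_exp_integral_add {Ω : Type*} {mΩ : MeasurableSpace Ω}
    {μ : Measure Ω} [IsProbabilityMeasure μ] {X : Ω → ℝ} {a : ℝ} (hX : AEMeasurable X μ)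
    (hb : ∀ᵐ ω ∂μ, |X ω| ≤ a) :
    mgf X μ 1 ≤ exp (μ[X] + a ^ 2 / 2) := by
  have hsub := (hasSubgaussianMGF_of_mem_Icc hX (hb.mono fun _ => abs_le.mp)).mgf_le 1
  have hc : (((‖a - -a‖₊ / 2) ^ 2 : NNReal) : ℝ) = a ^ 2 := by simp [← two_mul, sq_abs]
  simp_rw [hc, one_pow, mul_one, sub_eq_add_neg, mgf_add_const, one_mul] at hsub
  calc mgf X μ 1 = mgf X μ 1 * exp (-μ[X]) * exp μ[X] := by
        rw [mul_assoc, ← exp_add, neg_add_cancel, exp_zero, mul_one]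
    _ ≤ exp (a ^ 2 / 2) * exp μ[X] := by gcongr
    _ = exp (μ[X] + a ^ 2 / 2) := by rw [← exp_add, add_comm]

lemma sum_mul_exp_le_exp_sum_mul_add {ι : Type*} [Fintype ι] {p t : ι → ℝ} {a : ℝ}
    (hp : ∀ i, 0 ≤ p i) (hp_sum : ∑ i, p i = 1) (ht : ∀ i, |t i| ≤ a) :
    ∑ i, p i * exp (t i) ≤ exp (∑ i, p i * t i + a ^ 2 / 2) := by
  have hsum : ∑ i, ENNReal.ofReal (p i) = 1 := by
    rw [← ENNReal.ofReal_sum_of_nonneg fun i _ => hp i, hp_sum, ENNReal.ofReal_one]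
  let _ : MeasurableSpace ι := ⊤
  let μ := (PMF.ofFintype _ hsum).toMeasure
  have hμ : ∀ f : ι → ℝ, ∫ i, f i ∂μ = ∑ i, p i * f i := fun f => by
    simp [μ, PMF.integral_eq_sum, ENNReal.toReal_ofReal (hp _)]
  have := mgf_one_le_exp_integral_add (μ := μ) (measurable_of_countable t).aemeasurable
    (.of_forall ht)
  simpa [mgf, hμ] using this

noncomputable def softmax {m : ℕ} (β : ℝ) (x : Fin m → ℝ) (i : Fin m) : ℝ :=
  exp (β * x i) / ∑ j, exp (β * x j)

section softmax

variable {m : ℕ} [NeZero m] (β : ℝ) (x : Fin m → ℝ)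

lemma sum_exp_mul_pos : 0 < ∑ j, exp (β * x j) :=
  Finset.sum_pos (fun _ _ => exp_pos _) Finset.univ_nonempty

lemma softmax_pos (i : Fin m) : 0 < softmax β x i :=
  div_pos (exp_pos _) (sum_exp_mul_pos β x)

lemma sum_softmax : ∑ i, softmax β x i = 1 := by
  simp only [softmax]
  rw [← Finset.sum_div, div_self (sum_exp_mul_pos β x).ne']

lemma smax_add (h : Fin m → ℝ) :
    smax β (x + h) = smax β x + 1 / β * log (∑ i, softmax β x i * exp (β * h i)) := by
  have hsum : ∑ i, softmax β x i * exp (β * h i)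
      = (∑ i, exp (β * (x + h) i)) / ∑ j, exp (β * x j) := by
    simp only [softmax, div_mul_eq_mul_div, ← exp_add, ← mul_add, Finset.sum_div, Pi.add_apply]
  rw [hsum, log_div (sum_exp_mul_pos β (x + h)).ne' (sum_exp_mul_pos β x).ne', smax, smax,
    ← mul_add, add_sub_cancel]

end softmax

/-- Fact A.1, Property 3: β-smoothness of the smooth maximum with respect to the
ℓ∞-norm (the norm on the Pi type `Fin m → ℝ` is the sup norm). -/
theorem smax_smooth (m : ℕ) (hm : 1 ≤ m) (β : ℝ) (hβ : 0 < β)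
    (x h : Fin m → ℝ) (p : Fin m → ℝ)
    (hp : ∀ i, p i = Real.exp (β * x i) / ∑ j, Real.exp (β * x j)) :
    smax β (x + h) ≤ smax β x + (∑ i, p i * h i) + β * ‖h‖ ^ 2 := by
  have : NeZero m := ⟨by omega⟩
  obtain rfl : p = softmax β x := funext hp
  have hβh : ∀ i, |β * h i| ≤ β * ‖h‖ := fun i => by
    rw [abs_mul, abs_of_pos hβ]
    exact mul_le_mul_of_nonneg_left (norm_le_pi_norm h i) hβ.le
  have hlog : log (∑ i, softmax β x i * exp (β * h i))
      ≤ β * ∑ i, softmax β x i * h i + (β * ‖h‖) ^ 2 / 2 := by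
    rw [log_le_iff_le_exp (Finset.sum_pos (fun i _ => mul_pos (softmax_pos β x i) (exp_pos _))
      Finset.univ_nonempty), Finset.mul_sum]
    simpa only [mul_left_comm β] using sum_mul_exp_le_exp_sum_mul_add
      (fun i => (softmax_pos β x i).le) (sum_softmax β x) hβh
  calc smax β (x + h)
        ≤ smax β x + 1 / β * (β * ∑ i, softmax β x i * h i + (β * ‖h‖) ^ 2 / 2) := by
        rw [smax_add]; gcongr
    _ = smax β x + ∑ i, softmax β x i * h i + β * ‖h‖ ^ 2 / 2 := by field_simp; ring
    _ ≤ smax β x + ∑ i, softmax β x i * h i + β * ‖h‖ ^ 2 := by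
        gcongr; exact half_le_self (by positivity)
end

section
/- (Theorem 2.1: multiplicative weights for the feasibility task, stated for an arbitrary oracle-response sequence.) Let m, n ≥ 1 be integers, A ∈ ℝ^{m×n}, b ∈ ℝ^n, γ ∈ ℝ, ε > 0, ρ > 0, and set β := ε/(2ρ²). Let T ≥ 1 be an integer with T ≥ 4·ε^{−2}·ρ²·ln(2m), and let x_1, …, x_T ∈ ℝ^n be any sequence. For t = 1, …, T, let S_t := ∑_{s<t} x_s (so S_1 = 0), let q_t ∈ ℝ^{2m} be the vector whose first m coordinates are A S_t and whose last m coordinates are −A S_t, and define p_t ∈ ℝ^m by p_t(i) := (exp(β·q_t(i)) − exp(β·q_t(i+m)))/∑_{j=1}^{2m} exp(β·q_t(j)). Assume that for every t: ‖A x_t‖∞ ≤ ρ and ⟨p_t, A x_t⟩ + ⟨b, x_t⟩ ≤ γ − ε. Then the average x_* := (1/T)·∑_{t=1}^T x_t satisfies ‖A x_*‖∞ + ⟨b, x_*⟩ ≤ γ. -/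
/-!
Follow the potential `Φ(v) = ∑ᵢ (exp (β vᵢ) + exp (-β vᵢ))` along the running sums `U_t = A S_t`.
The weights satisfy `Φ(v) pᵢ = exp (β vᵢ) - exp (-β vᵢ)`, so `exp z ≤ 1 + z + z²` for `|z| ≤ 1`
shows that, when `βρ ≤ 1`, one round multiplies `Φ` by at most `exp (β ⟨p_t, A x_t⟩ + β²ρ²)`.
From `Φ(0) = 2m` and `exp (β ‖U_T‖∞) ≤ Φ(U_T)` this gives
`β T ‖A x_*‖∞ ≤ log (2m) + β ∑ₜ ⟨p_t, A x_t⟩ + T β²ρ²`; with `β = ε / (2ρ²)` and the bound on `T`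
each error term is at most `ε / 2` after dividing by `βT`. Hence `‖A x_*‖∞` exceeds the average
of `⟨p_t, A x_t⟩` by at most `ε`, and averaging the oracle inequalities concludes. When `ε > 2ρ`
the width bound alone gives the same estimate.
-/

open Finset Real

theorem Real.exp_add_exp_neg_add_le {y z : ℝ} (hz : |z| ≤ 1) :
    exp (y + z) + exp (-(y + z)) ≤
      (exp y + exp (-y)) * (1 + z ^ 2) + z * (exp y - exp (-y)) := by
  have hpos := (abs_le.mp (abs_exp_sub_one_sub_id_le hz)).2
  have hneg := (abs_le.mp (abs_exp_sub_one_sub_id_le (x := -z) (by rwa [abs_neg]))).2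
  rw [neg_add, exp_add, exp_add]
  nlinarith [exp_pos y, exp_pos (-y)]

theorem Fin.sum_filter_lt_eq_sum_range {M : Type*} [AddCommMonoid M] {T : ℕ} (x : Fin T → M)
    (t : Fin T) :
    ∑ s ∈ univ.filter (· < t), x s = ∑ k ∈ range t, if h : k < T then x ⟨k, h⟩ else 0 := by
  rw [filter_gt_eq_Iio, ← Nat.Iio_eq_range, ← Fin.map_valEmbedding_Iio, sum_map]
  exact sum_congr rfl fun s _ => by simp

theorem le_mul_exp_sum_range_of_le_mul_exp {f g : ℕ → ℝ}
    (h : ∀ k, f (k + 1) ≤ f k * exp (g k)) (K : ℕ) :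
    f K ≤ f 0 * exp (∑ k ∈ range K, g k) := by
  induction K with
  | zero => simp
  | succ K ih =>
    calc f (K + 1) ≤ f K * exp (g K) := h K
      _ ≤ f 0 * exp (∑ k ∈ range K, g k) * exp (g K) := by gcongr
      _ = f 0 * exp (∑ k ∈ range (K + 1), g k) := by
        rw [sum_range_succ, exp_add, mul_assoc]

namespace MultiplicativeWeights

variable {ι : Type*} [Fintype ι]

noncomputable def potential (β : ℝ) (v : ι → ℝ) : ℝ :=
  ∑ i, (exp (β * v i) + exp (-(β * v i)))

noncomputable def weights (β : ℝ) (v : ι → ℝ) (i : ι) : ℝ :=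
  (exp (β * v i) - exp (-(β * v i))) / potential β v

theorem potential_nonneg (β : ℝ) (v : ι → ℝ) : 0 ≤ potential β v :=
  sum_nonneg fun _ _ => by positivity

theorem potential_pos [Nonempty ι] (β : ℝ) (v : ι → ℝ) : 0 < potential β v :=
  sum_pos (fun _ _ => by positivity) univ_nonempty

theorem potential_zero (β : ℝ) : potential β (0 : ι → ℝ) = 2 * Fintype.card ι := by
  simp [potential, two_mul]

theorem exp_abs_le_potential (β : ℝ) (v : ι → ℝ) (i : ι) :
    exp |β * v i| ≤ potential β v := by
  have hi : exp (β * v i) + exp (-(β * v i)) ≤ potential β v :=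
    single_le_sum (f := fun j => exp (β * v j) + exp (-(β * v j)))
      (fun _ _ => by positivity) (mem_univ i)
  rcases abs_cases (β * v i) with ⟨h, -⟩ | ⟨h, -⟩ <;> rw [h] <;>
    linarith [exp_pos (β * v i), exp_pos (-(β * v i))]

theorem potential_mul_weights [Nonempty ι] (β : ℝ) (v : ι → ℝ) (i : ι) :
    potential β v * weights β v i = exp (β * v i) - exp (-(β * v i)) :=
  mul_div_cancel₀ _ (potential_pos β v).ne'

theorem sum_abs_weights_le_one (β : ℝ) (v : ι → ℝ) : ∑ i, |weights β v i| ≤ 1 := by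
  calc ∑ i, |weights β v i|
      ≤ ∑ i, (exp (β * v i) + exp (-(β * v i))) / potential β v := by
        gcongr with i
        rw [weights, abs_div, abs_of_nonneg (potential_nonneg β v)]
        exact div_le_div_of_nonneg_right (abs_sub_le_iff.mpr
          ⟨by linarith [exp_pos (-(β * v i))], by linarith [exp_pos (β * v i)]⟩)
          (potential_nonneg β v)
    _ = potential β v / potential β v := by rw [← sum_div, potential]
    _ ≤ 1 := div_self_le_one _

theorem abs_sum_weights_mul_le (β : ℝ) (v u : ι → ℝ) : |∑ i, weights β v i * u i| ≤ ‖u‖ := by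
  calc |∑ i, weights β v i * u i| ≤ ∑ i, |weights β v i| * ‖u‖ := by
        refine (abs_sum_le_sum_abs _ _).trans (sum_le_sum fun i _ => ?_)
        rw [abs_mul]
        exact mul_le_mul_of_nonneg_left (norm_le_pi_norm u i) (abs_nonneg _)
    _ ≤ 1 * ‖u‖ := by rw [← sum_mul]; gcongr; exact sum_abs_weights_le_one β v
    _ = ‖u‖ := one_mul _

theorem potential_add_le [Nonempty ι] {β ρ : ℝ} (hβ : 0 ≤ β) (hβρ : β * ρ ≤ 1) (v : ι → ℝ)
    {u : ι → ℝ} (hu : ‖u‖ ≤ ρ) :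
    potential β (v + u) ≤ potential β v * exp (β * ∑ i, weights β v i * u i + β ^ 2 * ρ ^ 2) := by
  have hterm : ∀ i, exp (β * (v + u) i) + exp (-(β * (v + u) i)) ≤
      (exp (β * v i) + exp (-(β * v i))) * (1 + β ^ 2 * ρ ^ 2) +
        β * potential β v * (weights β v i * u i) := by
    intro i
    have hui : |u i| ≤ ρ := (norm_le_pi_norm u i).trans hu
    have hβu : |β * u i| ≤ β * ρ := by rw [abs_mul, abs_of_nonneg hβ]; gcongr
    have hsq : (β * u i) ^ 2 ≤ β ^ 2 * ρ ^ 2 := by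
      rw [← mul_pow, ← sq_abs]; gcongr
    calc exp (β * (v + u) i) + exp (-(β * (v + u) i))
        ≤ (exp (β * v i) + exp (-(β * v i))) * (1 + (β * u i) ^ 2) +
            β * u i * (exp (β * v i) - exp (-(β * v i))) := by
          rw [Pi.add_apply, mul_add]; exact exp_add_exp_neg_add_le (hβu.trans hβρ)
      _ ≤ _ := by
          rw [show β * potential β v * (weights β v i * u i) =
              β * u i * (potential β v * weights β v i) by ring, potential_mul_weights]
          gcongr
  set c := ∑ i, weights β v i * u i
  calc potential β (v + u)
      ≤ ∑ i, ((exp (β * v i) + exp (-(β * v i))) * (1 + β ^ 2 * ρ ^ 2) +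
          β * potential β v * (weights β v i * u i)) := sum_le_sum fun i _ => hterm i
    _ = potential β v * (1 + (β * c + β ^ 2 * ρ ^ 2)) := by
      rw [sum_add_distrib, ← sum_mul, ← mul_sum, ← potential]
      ring
    _ ≤ _ := mul_le_mul_of_nonneg_left (by linarith [add_one_le_exp (β * c + β ^ 2 * ρ ^ 2)])
        (potential_nonneg β v)

noncomputable def gain (β : ℝ) (u : ℕ → ι → ℝ) (k : ℕ) : ℝ :=
  ∑ i, weights β (∑ l ∈ range k, u l) i * u k i

theorem neg_norm_le_gain (β : ℝ) (u : ℕ → ι → ℝ) (k : ℕ) : -‖u k‖ ≤ gain β u k :=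
  neg_le_of_abs_le (abs_sum_weights_mul_le β _ (u k))

theorem mul_abs_sum_apply_le {β ρ : ℝ} (hβ : 0 ≤ β) (hβρ : β * ρ ≤ 1) {u : ℕ → ι → ℝ}
    (hu : ∀ k, ‖u k‖ ≤ ρ) (K : ℕ) (i : ι) :
    β * |(∑ k ∈ range K, u k) i| ≤
      log (2 * Fintype.card ι) + β * ∑ k ∈ range K, gain β u k + K * (β ^ 2 * ρ ^ 2) := by
  have : Nonempty ι := ⟨i⟩
  have hstep (k : ℕ) : potential β (∑ l ∈ range (k + 1), u l) ≤
      potential β (∑ l ∈ range k, u l) * exp (β * gain β u k + β ^ 2 * ρ ^ 2) := by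
    rw [sum_range_succ]
    exact potential_add_le hβ hβρ _ (hu k)
  have hΦ := le_mul_exp_sum_range_of_le_mul_exp
    (f := fun k => potential β (∑ l ∈ range k, u l)) hstep K
  rw [range_zero, sum_empty, potential_zero, sum_add_distrib, ← mul_sum, sum_const, card_range,
    nsmul_eq_mul] at hΦ
  have hcard : (0 : ℝ) < 2 * Fintype.card ι := by positivity
  have hi := exp_abs_le_potential β (∑ k ∈ range K, u k) i
  rw [abs_mul, abs_of_nonneg hβ] at hi
  rw [← exp_le_exp, add_assoc, exp_add, exp_log hcard]
  exact hi.trans hΦ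

theorem norm_average_le_of_lt {β ε ρ : ℝ} (hερ : 2 * ρ < ε) {u : ℕ → ι → ℝ}
    (hu : ∀ k, ‖u k‖ ≤ ρ) {K : ℕ} (hK : 0 < K) :
    ‖(K : ℝ)⁻¹ • ∑ k ∈ range K, u k‖ ≤ (K : ℝ)⁻¹ * ∑ k ∈ range K, gain β u k + ε := by
  have hK' : (0 : ℝ) < K := Nat.cast_pos.mpr hK
  have hnorm : ‖(K : ℝ)⁻¹ • ∑ k ∈ range K, u k‖ ≤ ρ := by
    calc ‖(K : ℝ)⁻¹ • ∑ k ∈ range K, u k‖ ≤ (K : ℝ)⁻¹ * ∑ k ∈ range K, ‖u k‖ := by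
          rw [norm_smul, norm_inv, Real.norm_natCast]; gcongr; exact norm_sum_le _ _
      _ ≤ (K : ℝ)⁻¹ * (K * ρ) := by
          gcongr; simpa using sum_le_sum fun k (_ : k ∈ range K) => hu k
      _ = ρ := by field_simp
  have hgain : -ρ ≤ (K : ℝ)⁻¹ * ∑ k ∈ range K, gain β u k := by
    rw [le_inv_mul_iff₀ hK']
    simpa using sum_le_sum fun k (_ : k ∈ range K) =>
      (neg_le_neg (hu k)).trans (neg_norm_le_gain β u k)
  linarith

theorem norm_average_le_of_log_add_le [Nonempty ι] {β ε ρ : ℝ} (hβ : 0 < β) (hβρ : β * ρ ≤ 1)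
    {u : ℕ → ι → ℝ} (hu : ∀ k, ‖u k‖ ≤ ρ) {K : ℕ} (hK : 0 < K)
    (hbudget : log (2 * Fintype.card ι) + K * (β ^ 2 * ρ ^ 2) ≤ K * β * ε) :
    ‖(K : ℝ)⁻¹ • ∑ k ∈ range K, u k‖ ≤ (K : ℝ)⁻¹ * ∑ k ∈ range K, gain β u k + ε := by
  refine (pi_norm_le_iff_of_nonempty _).mpr fun i => ?_
  have hU : |(∑ k ∈ range K, u k) i| ≤ ∑ k ∈ range K, gain β u k + K * ε := by
    refine le_of_mul_le_mul_left ?_ hβ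
    linarith [mul_abs_sum_apply_le hβ.le hβρ hu K i]
  rw [Real.norm_eq_abs, Pi.smul_apply, smul_eq_mul, abs_mul, abs_inv, Nat.abs_cast]
  calc (K : ℝ)⁻¹ * |(∑ k ∈ range K, u k) i|
      ≤ (K : ℝ)⁻¹ * (∑ k ∈ range K, gain β u k + K * ε) := by gcongr
    _ = _ := by field_simp

theorem norm_average_le [Nonempty ι] {ε ρ : ℝ} (hε : 0 < ε) (hρ : 0 < ρ) {u : ℕ → ι → ℝ}
    (hu : ∀ k, ‖u k‖ ≤ ρ) {K : ℕ} (hK₀ : 0 < K)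
    (hK : 4 * ε⁻¹ ^ 2 * ρ ^ 2 * log (2 * Fintype.card ι) ≤ K) :
    ‖(K : ℝ)⁻¹ • ∑ k ∈ range K, u k‖ ≤
      (K : ℝ)⁻¹ * ∑ k ∈ range K, gain (ε / (2 * ρ ^ 2)) u k + ε := by
  rcases lt_or_ge (2 * ρ) ε with hερ | hερ
  · exact norm_average_le_of_lt hερ hu hK₀
  refine norm_average_le_of_log_add_le (by positivity) ?_ hu hK₀ ?_
  · rw [div_mul_eq_mul_div, div_le_one (by positivity)]
    nlinarith
  · have hlog : log (2 * Fintype.card ι) ≤ ε ^ 2 / (4 * ρ ^ 2) * K :=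
      calc log (2 * Fintype.card ι)
          = ε ^ 2 / (4 * ρ ^ 2) * (4 * ε⁻¹ ^ 2 * ρ ^ 2 * log (2 * Fintype.card ι)) := by
            field_simp
        _ ≤ ε ^ 2 / (4 * ρ ^ 2) * K := by gcongr
    have hquad : (K : ℝ) * ((ε / (2 * ρ ^ 2)) ^ 2 * ρ ^ 2) = ε ^ 2 / (4 * ρ ^ 2) * K := by
      field_simp; ring
    have hlin : (K : ℝ) * (ε / (2 * ρ ^ 2)) * ε = 2 * (ε ^ 2 / (4 * ρ ^ 2) * K) := by
      field_simp; ring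
    linarith

end MultiplicativeWeights

open MultiplicativeWeights in
theorem mw_feasibility_general (m n : ℕ) (hm : 1 ≤ m)
    (A : Matrix (Fin m) (Fin n) ℝ) (b : Fin n → ℝ) (γ : ℝ)
    (ε ρ : ℝ) (hε : 0 < ε) (hρ : 0 < ρ)
    (β : ℝ) (hβ : β = ε / (2 * ρ ^ 2))
    (T : ℕ) (hT1 : 1 ≤ T)
    (hT : 4 * ε⁻¹ ^ 2 * ρ ^ 2 * Real.log (2 * m) ≤ (T : ℝ))
    (x : Fin T → Fin n → ℝ)
    (S : Fin T → Fin n → ℝ)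
    (hS : ∀ t, S t = ∑ s ∈ Finset.univ.filter (fun s => s < t), x s)
    (q : Fin T → Fin (m + m) → ℝ)
    (hq : ∀ t (i : Fin m), q t (Fin.castAdd m i) = A.mulVec (S t) i ∧
      q t (Fin.natAdd m i) = -(A.mulVec (S t) i))
    (p : Fin T → Fin m → ℝ)
    (hp : ∀ t (i : Fin m), p t i =
      (Real.exp (β * q t (Fin.castAdd m i)) - Real.exp (β * q t (Fin.natAdd m i)))
        / ∑ j, Real.exp (β * q t j))
    (hwidth : ∀ t, ‖A.mulVec (x t)‖ ≤ ρ)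
    (horacle : ∀ t, (∑ i, p t i * A.mulVec (x t) i) + (∑ i, b i * x t i) ≤ γ - ε)
    (xstar : Fin n → ℝ) (hxstar : xstar = (T : ℝ)⁻¹ • ∑ t, x t) :
    ‖A.mulVec xstar‖ + (∑ i, b i * xstar i) ≤ γ := by
  have : NeZero m := ⟨by omega⟩
  set u : ℕ → Fin m → ℝ := fun k => A.mulVec (if h : k < T then x ⟨k, h⟩ else 0)
  have hu_apply (t : Fin T) : u t = A.mulVec (x t) := by simp [u]
  have hAS (t : Fin T) : A.mulVec (S t) = ∑ k ∈ range t, u k := by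
    rw [hS, Fin.sum_filter_lt_eq_sum_range, Matrix.mulVec_sum]
  have hp_weights (t : Fin T) : p t = weights β (∑ k ∈ range t, u k) := by
    ext i
    rw [hp, Fin.sum_univ_add, ← sum_add_distrib]
    simp only [hq, mul_neg, hAS, weights, potential]
  have hgain : ∑ k ∈ range T, gain β u k = ∑ t, ∑ i, p t i * (A.mulVec (x t)) i := by
    rw [← Fin.sum_univ_eq_sum_range]
    exact sum_congr rfl fun t _ => by rw [gain, hp_weights, hu_apply]
  have hAx : A.mulVec xstar = (T : ℝ)⁻¹ • ∑ k ∈ range T, u k := by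
    rw [hxstar, Matrix.mulVec_smul, Matrix.mulVec_sum, ← Fin.sum_univ_eq_sum_range]
    simp only [hu_apply]
  have hbx : ∑ i, b i * xstar i = (T : ℝ)⁻¹ * ∑ t, ∑ i, b i * x t i := by
    change dotProduct b xstar = _
    rw [hxstar, dotProduct_smul, dotProduct_sum, smul_eq_mul]
    rfl
  have hregret := norm_average_le hε hρ (u := u) (fun k => by
    by_cases h : k < T <;> simp [u, h, hwidth]; positivity) hT1 (by simpa using hT)
  rw [← hβ, hgain, ← hAx] at hregret
  have havg : (T : ℝ)⁻¹ * (∑ t, ∑ i, p t i * A.mulVec (x t) i) +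
      (T : ℝ)⁻¹ * ∑ t, ∑ i, b i * x t i ≤ γ - ε := by
    rw [← mul_add, ← sum_add_distrib, inv_mul_le_iff₀ (by positivity)]
    simpa [mul_sub] using sum_le_sum fun t (_ : t ∈ univ) => horacle t
  rw [hbx]
  linarith

/-- Theorem 2.1: multiplicative weights for the feasibility task, stated for an
arbitrary oracle-response sequence. The norm on `Fin m → ℝ` is the sup (ℓ∞)
norm; the vector `q_t ∈ ℝ^{2m}` consists of `A S_t` followed by `−A S_t`. -/
theorem mw_feasibility (m n : ℕ) (hm : 1 ≤ m) (hn : 1 ≤ n)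
    (A : Matrix (Fin m) (Fin n) ℝ) (b : Fin n → ℝ) (γ : ℝ)
    (ε ρ : ℝ) (hε : 0 < ε) (hρ : 0 < ρ)
    (β : ℝ) (hβ : β = ε / (2 * ρ ^ 2))
    (T : ℕ) (hT1 : 1 ≤ T)
    (hT : 4 * ε⁻¹ ^ 2 * ρ ^ 2 * Real.log (2 * m) ≤ (T : ℝ))
    (x : Fin T → Fin n → ℝ)
    (S : Fin T → Fin n → ℝ)
    (hS : ∀ t, S t = ∑ s ∈ Finset.univ.filter (fun s => s < t), x s)
    (q : Fin T → Fin (m + m) → ℝ)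
    (hq : ∀ t (i : Fin m), q t (Fin.castAdd m i) = A.mulVec (S t) i ∧
      q t (Fin.natAdd m i) = -(A.mulVec (S t) i))
    (p : Fin T → Fin m → ℝ)
    (hp : ∀ t (i : Fin m), p t i =
      (Real.exp (β * q t (Fin.castAdd m i)) - Real.exp (β * q t (Fin.natAdd m i)))
        / ∑ j, Real.exp (β * q t j))
    (hwidth : ∀ t, ‖A.mulVec (x t)‖ ≤ ρ)
    (horacle : ∀ t, (∑ i, p t i * A.mulVec (x t) i) + (∑ i, b i * x t i) ≤ γ - ε)
    (xstar : Fin n → ℝ) (hxstar : xstar = (T : ℝ)⁻¹ • ∑ t, x t) :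
    ‖A.mulVec xstar‖ + (∑ i, b i * xstar i) ≤ γ :=
  mw_feasibility_general m n hm A b γ ε ρ hε hρ β hβ T hT1 hT x S hS q hq p hp hwidth horacle xstar
    hxstar
end

section
/- (Subclaim from the proof of Theorem 4.3: a linear cost approximator has bounded columns after normalization.) Let B ∈ ℝ^{n×m}, let w : {1,…,m} → ℝ with w(e) > 0 for all e, W = diag(w), let P ∈ ℝ^{k×n}, and let α ≥ 0. Suppose that ‖P c‖₁ ≤ α·‖c‖_OPT for every c ∈ ℝ^n in the range of B, where ‖c‖_OPT := inf{‖W f‖₁ : f ∈ ℝ^m, Bf = c}. Then for every y ∈ ℝ^k with ‖y‖∞ ≤ 1 we have ‖W^{−1} B^T P^T y‖∞ ≤ α. -/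
/-- The optimal transshipment cost `‖c‖_OPT = inf {‖Wf‖₁ : Bf = c}`. -/
noncomputable def optCost {n m : ℕ} (B : Matrix (Fin n) (Fin m) ℝ)
    (w : Fin m → ℝ) (c : Fin n → ℝ) : ℝ :=
  sInf {t : ℝ | ∃ f : Fin m → ℝ, B.mulVec f = c ∧ (∑ e, |w e * f e|) = t}

open Matrix

theorem optCost_mulVec_le {n m : ℕ} (B : Matrix (Fin n) (Fin m) ℝ) (w f : Fin m → ℝ) :
    optCost B w (B *ᵥ f) ≤ ∑ e, |w e * f e| :=
  csInf_le ⟨0, by rintro _ ⟨g, -, rfl⟩; positivity⟩ ⟨f, rfl, rfl⟩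

theorem optCost_mulVec_single_le {n m : ℕ} (B : Matrix (Fin n) (Fin m) ℝ) (w : Fin m → ℝ)
    (e : Fin m) : optCost B w (B *ᵥ Pi.single e 1) ≤ |w e| := by
  refine (optCost_mulVec_le B w _).trans_eq ?_
  rw [Fintype.sum_eq_single e fun e' he' => by simp [Pi.single_eq_of_ne he']]
  simp

theorem transpose_mulVec_transpose_mulVec_apply {ι κ μ : Type*} [Fintype ι] [Fintype κ]
    [Fintype μ] [DecidableEq μ] (P : Matrix κ ι ℝ) (B : Matrix ι μ ℝ) (y : κ → ℝ) (e : μ) :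
    (Bᵀ *ᵥ (Pᵀ *ᵥ y)) e = y ⬝ᵥ (P *ᵥ (B *ᵥ Pi.single e 1)) := by
  rw [mulVec_transpose, mulVec_transpose, dotProduct_mulVec, dotProduct_mulVec,
    dotProduct_single_one]

theorem abs_dotProduct_le_norm_mul_sum_abs {ι : Type*} [Fintype ι] (y v : ι → ℝ) :
    |y ⬝ᵥ v| ≤ ‖y‖ * ∑ i, |v i| := by
  rw [Finset.mul_sum]
  refine (Finset.abs_sum_le_sum_abs _ _).trans (Finset.sum_le_sum fun i _ => ?_)
  rw [abs_mul, ← Real.norm_eq_abs (y i)]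
  exact mul_le_mul_of_nonneg_right (norm_le_pi_norm y i) (abs_nonneg _)

/-- Subclaim from the proof of Theorem 4.3: if `‖Pc‖₁ ≤ α·‖c‖_OPT` for every
demand `c` in the range of `B`, then `‖W⁻¹BᵀPᵀy‖∞ ≤ α` for every `‖y‖∞ ≤ 1`.
The norms on the Pi types `Fin m → ℝ` and `Fin k → ℝ` are the sup norms. -/
theorem cost_approximator_bounded_columns (n m k : ℕ)
    (B : Matrix (Fin n) (Fin m) ℝ) (w : Fin m → ℝ) (hw : ∀ e, 0 < w e)
    (P : Matrix (Fin k) (Fin n) ℝ) (α : ℝ) (hα : 0 ≤ α)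
    (hP : ∀ c : Fin n → ℝ, (∃ f : Fin m → ℝ, B.mulVec f = c) →
      (∑ i, |P.mulVec c i|) ≤ α * optCost B w c) :
    ∀ y : Fin k → ℝ, ‖y‖ ≤ 1 →
      ‖(fun e => B.transpose.mulVec (P.transpose.mulVec y) e / w e)‖ ≤ α := by
  intro y hy
  refine (pi_norm_le_iff_of_nonneg hα).2 fun e => ?_
  -- The column of `B` at `e` is a demand routed at cost `w e` by the unit flow on `e`.
  set c := B *ᵥ Pi.single e 1
  rw [Real.norm_eq_abs, abs_div, abs_of_pos (hw e), div_le_iff₀ (hw e),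
    transpose_mulVec_transpose_mulVec_apply]
  calc |y ⬝ᵥ (P *ᵥ c)| ≤ ‖y‖ * ∑ i, |(P *ᵥ c) i| := abs_dotProduct_le_norm_mul_sum_abs _ _
    _ ≤ ∑ i, |(P *ᵥ c) i| := mul_le_of_le_one_left (by positivity) hy
    _ ≤ α * optCost B w c := hP c ⟨_, rfl⟩
    _ ≤ α * w e := by
      gcongr
      exact (optCost_mulVec_single_le B w e).trans_eq (abs_of_pos (hw e))
end

section
/- (Theorem 4.3: a linear cost approximator yields a dual-only preconditioner.) Let B ∈ ℝ^{n×m}, let w : {1,…,m} → ℝ with w(e) > 0 for all e, W = diag(w), let P ∈ ℝ^{k×n}, and let α ≥ 0. Suppose that for every c ∈ ℝ^n in the range of B we have ‖c‖_OPT ≤ ‖P c‖₁ ≤ α·‖c‖_OPT, where ‖c‖_OPT := inf{‖W f‖₁ : f ∈ ℝ^m, Bf = c}. Let d ∈ ℝ^n be in the range of B and define φ := P^T·sign(P d), where sign is applied coordinatewise (sign(t) = 1 if t > 0, −1 if t < 0, 0 if t = 0). Then: (i) ‖W^{−1} B^T φ‖∞ ≤ α (approximate dual feasibility), and (ii) ⟨d,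 φ⟩ = ‖P d‖₁ ≥ ‖d‖_OPT (strong duality). -/
lemma mul_sign_eq_abs (x : ℝ) : x * Real.sign x = |x| := by
  rcases lt_trichotomy x 0 with h | h | h
  · rw [Real.sign_of_neg h, abs_of_neg h]; ring
  · simp [h]
  · rw [Real.sign_of_pos h, abs_of_pos h]; ring

/-- Theorem 4.3: a linear cost approximator yields a dual-only preconditioner.
With `φ := Pᵀ·sign(Pd)` we get approximate dual feasibility
`‖W⁻¹Bᵀφ‖∞ ≤ α` and strong duality `⟨d, φ⟩ = ‖Pd‖₁ ≥ ‖d‖_OPT`.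
The ℓ∞-norm on `Fin m → ℝ` is the sup norm; `Real.sign` is `1` on positives,
`-1` on negatives, and `0` at `0`. -/
theorem cost_approximator_gives_dual_preconditioner (n m k : ℕ)
    (B : Matrix (Fin n) (Fin m) ℝ) (w : Fin m → ℝ) (hw : ∀ e, 0 < w e)
    (P : Matrix (Fin k) (Fin n) ℝ) (α : ℝ) (hα : 0 ≤ α)
    (hP : ∀ c : Fin n → ℝ, (∃ f : Fin m → ℝ, B.mulVec f = c) →
      optCost B w c ≤ (∑ i, |P.mulVec c i|) ∧
      (∑ i, |P.mulVec c i|) ≤ α * optCost B w c)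
    (d : Fin n → ℝ) (hd : ∃ f : Fin m → ℝ, B.mulVec f = d)
    (φ : Fin n → ℝ)
    (hφ : φ = P.transpose.mulVec (fun i => Real.sign (P.mulVec d i))) :
    ‖(fun e => B.transpose.mulVec φ e / w e)‖ ≤ α ∧
    (∑ v, d v * φ v) = (∑ i, |P.mulVec d i|) ∧
    optCost B w d ≤ ∑ v, d v * φ v := by
  set s : Fin k → ℝ := fun i => Real.sign (P.mulVec d i) with hs
  have key : ∀ c : Fin n → ℝ, (∑ v, c v * φ v) = ∑ i, (P.mulVec c i) * s i := by
    intro c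
    subst hφ
    simp only [Matrix.mulVec, dotProduct, Matrix.transpose_apply]
    calc ∑ v, c v * ∑ i, P i v * s i
        = ∑ v, ∑ i, c v * (P i v * s i) := by simp [Finset.mul_sum]
      _ = ∑ i, ∑ v, c v * (P i v * s i) := Finset.sum_comm
      _ = ∑ i, (∑ v, P i v * c v) * s i := by
          refine Finset.sum_congr rfl fun i _ => ?_
          rw [Finset.sum_mul]
          exact Finset.sum_congr rfl fun v _ => by ring
  have hduality : (∑ v, d v * φ v) = ∑ i, |P.mulVec d i| := by
    rw [key d]
    exact Finset.sum_congr rfl fun i _ => mul_sign_eq_abs _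
  refine ⟨?_, hduality, ?_⟩
  · -- dual feasibility
    rw [pi_norm_le_iff_of_nonneg hα]
    intro e
    have hcol : B.mulVec (fun e' => if e' = e then 1 else 0) = fun v => B v e := by
      funext v
      simp [Matrix.mulVec, dotProduct, mul_ite]
    set c : Fin n → ℝ := fun v => B v e with hc
    have hopt_le : optCost B w c ≤ w e := by
      apply csInf_le
      · refine ⟨0, ?_⟩
        rintro t ⟨f, _, rfl⟩
        exact Finset.sum_nonneg fun e' _ => abs_nonneg _
      · refine ⟨fun e' => if e' = e then 1 else 0, hcol, ?_⟩
        simp only [mul_ite, mul_one, mul_zero, apply_ite abs, abs_zero]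
        rw [Finset.sum_ite_eq' Finset.univ e (fun x => |w x|)]
        simp [abs_of_pos (hw e)]
    have hPc := (hP c ⟨_, hcol⟩).2
    have hBTe : B.transpose.mulVec φ e = ∑ v, c v * φ v := by
      simp [Matrix.mulVec, dotProduct, Matrix.transpose_apply, hc]
    have habs : |B.transpose.mulVec φ e| ≤ α * w e := by
      rw [hBTe, key c]
      calc |∑ i, P.mulVec c i * s i| ≤ ∑ i, |P.mulVec c i * s i| :=
            Finset.abs_sum_le_sum_abs _ _
        _ ≤ ∑ i, |P.mulVec c i| := by
            refine Finset.sum_le_sum fun i _ => ?_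
            rw [abs_mul]
            have : |s i| ≤ 1 := by
              rcases Real.sign_apply_eq (P.mulVec d i) with h | h | h <;>
                simp [hs, h]
            nlinarith [abs_nonneg (P.mulVec c i)]
        _ ≤ α * optCost B w c := hPc
        _ ≤ α * w e := mul_le_mul_of_nonneg_left hopt_le hα
    have : ‖B.transpose.mulVec φ e / w e‖ = |B.transpose.mulVec φ e| / w e := by
      rw [Real.norm_eq_abs, abs_div, abs_of_pos (hw e)]
    rw [this, div_le_iff₀ (hw e)]
    exact habs
  · rw [hduality]
    exact (hP d hd).1
end

section
/- (Reducing the residual error, Appendix B.) Let B ∈ ℝ^{n×m}, let w : {1,…,m} → ℝ with w(e) > 0 for all e, W = diag(w), d ∈ ℝ^n, and 0 < ε ≤ 1/2. For a demand c ∈ ℝ^n write ‖c‖_OPT := inf{‖W f‖₁ : f ∈ ℝ^m, Bf = c}, and assume d is in the range of B. Let T ≥ 0 be an integer and let f_0, f_1, …, f_T ∈ ℝ^m be flows; define demands d_0 := d and d_{i+1} := d_i − B f_i for 0 ≤ i ≤ T. Assume that for every 0 ≤ i ≤ T: ‖W f_i‖₁ ≤ ‖d_i‖_OPT and ‖d_{i+1}‖_OPT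 ≤ (ε/2)·‖d_i‖_OPT. Then f_* := f_0 + f_1 + ⋯ + f_T satisfies ‖W f_*‖₁ ≤ (1 + ε)·‖d‖_OPT and ‖d − B f_*‖_OPT ≤ (ε/2)^{T+1}·‖d‖_OPT. -/
lemma optCost_nonneg {n m : ℕ} (B : Matrix (Fin n) (Fin m) ℝ)
    (w : Fin m → ℝ) (c : Fin n → ℝ) : 0 ≤ optCost B w c := by
  apply Real.sInf_nonneg
  rintro t ⟨g, -, rfl⟩
  positivity

/-- Reducing the residual error (Appendix B): iteratively routing the residual
demand yields a flow `f_* = f_0 + ⋯ + f_T` of cost at most `(1+ε)·‖d‖_OPT`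
whose residual demand `d − Bf_*` has optimal routing cost at most
`(ε/2)^{T+1}·‖d‖_OPT`. -/
theorem reducing_residual_error (n m : ℕ)
    (B : Matrix (Fin n) (Fin m) ℝ) (w : Fin m → ℝ) (hw : ∀ e, 0 < w e)
    (d : Fin n → ℝ) (ε : ℝ) (hε : 0 < ε) (hε2 : ε ≤ 1 / 2)
    (hd : ∃ f : Fin m → ℝ, B.mulVec f = d)
    (T : ℕ) (f : ℕ → Fin m → ℝ)
    (dd : ℕ → Fin n → ℝ) (hd0 : dd 0 = d)
    (hdd : ∀ i ≤ T, dd (i + 1) = dd i - B.mulVec (f i))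
    (hcost : ∀ i ≤ T, (∑ e, |w e * f i e|) ≤ optCost B w (dd i))
    (hdecay : ∀ i ≤ T, optCost B w (dd (i + 1)) ≤ (ε / 2) * optCost B w (dd i))
    (fstar : Fin m → ℝ) (hfstar : fstar = ∑ i ∈ Finset.range (T + 1), f i) :
    (∑ e, |w e * fstar e|) ≤ (1 + ε) * optCost B w d ∧
      optCost B w (d - B.mulVec fstar) ≤ (ε / 2) ^ (T + 1) * optCost B w d := by
  set C := optCost B w d with hCdef
  have hC : 0 ≤ C := optCost_nonneg B w d
  have hx0 : (0:ℝ) ≤ ε / 2 := by linarith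
  -- decay of optCost
  have hkey : ∀ i, i ≤ T + 1 → optCost B w (dd i) ≤ (ε / 2) ^ i * C := by
    intro i
    induction i with
    | zero => intro _; simp [hd0, hCdef]
    | succ k ih =>
      intro hk
      have hk' : k ≤ T := Nat.lt_succ_iff.mp hk
      calc optCost B w (dd (k + 1)) ≤ (ε / 2) * optCost B w (dd k) := hdecay k hk'
        _ ≤ (ε / 2) * ((ε / 2) ^ k * C) :=
            mul_le_mul_of_nonneg_left (ih (le_trans hk' (Nat.le_succ T))) hx0
        _ = (ε / 2) ^ (k + 1) * C := by ring
  -- telescoping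
  have htel : ∀ k, k ≤ T + 1 → dd k = d - B.mulVec (∑ i ∈ Finset.range k, f i) := by
    intro k
    induction k with
    | zero => intro _; simp [hd0]
    | succ k ih =>
      intro hk
      have hk' : k ≤ T := Nat.lt_succ_iff.mp hk
      rw [hdd k hk', ih (le_trans hk' (Nat.le_succ T)), Finset.sum_range_succ,
        Matrix.mulVec_add]
      abel
  constructor
  · -- cost bound
    have h1 : (∑ e, |w e * fstar e|) ≤
        ∑ i ∈ Finset.range (T + 1), ∑ e, |w e * f i e| := by
      rw [Finset.sum_comm]
      apply Finset.sum_le_sum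
      intro e _
      rw [hfstar]
      calc |w e * (∑ i ∈ Finset.range (T + 1), f i) e|
          = |∑ i ∈ Finset.range (T + 1), w e * f i e| := by
            rw [Finset.sum_apply, Finset.mul_sum]
        _ ≤ ∑ i ∈ Finset.range (T + 1), |w e * f i e| :=
            Finset.abs_sum_le_sum_abs _ _
    have h2 : (∑ i ∈ Finset.range (T + 1), ∑ e, |w e * f i e|) ≤
        ∑ i ∈ Finset.range (T + 1), (ε / 2) ^ i * C := by
      apply Finset.sum_le_sum
      intro i hi
      have hi' : i ≤ T := Nat.lt_succ_iff.mp (Finset.mem_range.mp hi)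
      exact le_trans (hcost i hi') (hkey i (le_trans hi' (Nat.le_succ T)))
    have hgs : (∑ i ∈ Finset.range (T + 1), (ε / 2) ^ i) ≤ 1 + ε := by
      have hgm := geom_sum_mul (ε / 2) (T + 1)
      have hpn : (0:ℝ) ≤ (ε / 2) ^ (T + 1) := pow_nonneg hx0 _
      nlinarith [hgm, hpn]
    calc (∑ e, |w e * fstar e|) ≤ ∑ i ∈ Finset.range (T + 1), (ε / 2) ^ i * C :=
          le_trans h1 h2
      _ = (∑ i ∈ Finset.range (T + 1), (ε / 2) ^ i) * C := by
          rw [Finset.sum_mul]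
      _ ≤ (1 + ε) * C := mul_le_mul_of_nonneg_right hgs hC
  · have : d - B.mulVec fstar = dd (T + 1) := by
      rw [htel (T + 1) le_rfl, hfstar]
    rw [this]
    exact hkey (T + 1) le_rfl
end
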